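/- arXiv:1801.09049 — 2 statements merged into one kernel-verified Lean document; each statement's English description precedes it below -/
import Mathlib

section
/- Let X^(1) and X^(2) be wide-sense stationary discrete-time processes with means μ₁, μ₂ and autocovariance functions γ₁, γ₂ satisfying ∑_{h=0}^∞ |γ_j(h)| < ∞ for j = 1, 2. With the weights w_j = 1/(j(j+1)), the covariance-based dissimilarity measure d*(X^(1), X^(2)) := ∑_{m,l=1}^∞ w_m w_l (√m·|μ₁ − μ₂| + ‖Γ₁(m) − Γ₂(m)‖_F) is finite, i.e. the double series converges. -/
open MeasureTheory Real

/-- The weights `w j = 1/(j(j+1))`. -/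
noncomputable def weight (j : ℕ) : ℝ := 1 / (j * (j + 1))

/-- The `m × m` Toeplitz covariance matrix `Γ(m)` of a wide-sense stationary
process with autocovariance function `γ`: `(Γ(m))_{ab} = γ(|a − b|)`. -/
noncomputable def toeplitzCov (γ : ℕ → ℝ) (m : ℕ) : Matrix (Fin m) (Fin m) ℝ :=
  fun a b => γ (((a : ℤ) - (b : ℤ)).natAbs)

/-- The Frobenius norm `‖M‖_F = √(∑_{a,b} M_{ab}²)`. -/
noncomputable def frobNorm {m : ℕ} (M : Matrix (Fin m) (Fin m) ℝ) : ℝ :=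
  Real.sqrt (∑ a : Fin m, ∑ b : Fin m, M a b ^ 2)

/-- The `(m, l)` summand of the covariance-based dissimilarity measure
`d*`: `w_m · w_l · (√m · |μ₁ − μ₂| + ‖Γ₁(m) − Γ₂(m)‖_F)`. -/
noncomputable def dstarTerm (μ₁ μ₂ : ℝ) (γ₁ γ₂ : ℕ → ℝ) (m l : ℕ) : ℝ :=
  weight m * weight l *
    (Real.sqrt m * |μ₁ - μ₂| + frobNorm (toeplitzCov γ₁ m - toeplitzCov γ₂ m))

/-!
Since `w_m √m ~ m^(-3/2)` and `∑ w_l < ∞`, it suffices to show `‖Γ₁(m) − Γ₂(m)‖_F = O(√m)`.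
The difference is the Toeplitz matrix of `δ = γ₁ − γ₂`. With `K = ∑ |δ h|`, each squared entry
is at most `K |δ(|a − b|)|` and each row of such terms sums to at most `2K`, so
`‖Γ₁(m) − Γ₂(m)‖_F² ≤ 2 m K²`.
-/

lemma weight_nonneg (j : ℕ) : 0 ≤ weight j := by
  unfold weight; positivity

lemma summable_weight_succ_mul_sqrt :
    Summable fun m : ℕ => weight (m + 1) * √((m + 1 : ℕ) : ℝ) := by
  have hp : Summable fun m : ℕ => ((((m + 1 : ℕ) : ℝ) ^ (3 / 2 : ℝ))⁻¹) :=
    (summable_nat_add_iff (f := fun n : ℕ => ((n : ℝ) ^ (3 / 2 : ℝ))⁻¹) 1).mpr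
      (Real.summable_nat_rpow_inv.mpr (by norm_num))
  refine hp.of_nonneg_of_le (fun m => mul_nonneg (weight_nonneg _) (sqrt_nonneg _)) fun m => ?_
  set x : ℝ := ((m + 1 : ℕ) : ℝ)
  have hx : 0 < x := by positivity
  have hx32 : x ^ (3 / 2 : ℝ) = x * √x := by
    rw [show (3 / 2 : ℝ) = 1 + 1 / 2 by norm_num, rpow_add hx, rpow_one, ← sqrt_eq_rpow]
  have hsq : √x * √x = x := mul_self_sqrt hx.le
  rw [hx32, show weight (m + 1) = 1 / (x * (x + 1)) by simp [weight, x],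
    div_mul_eq_mul_div, one_mul, ← one_div, div_le_div_iff₀ (by positivity) (by positivity)]
  nlinarith [sqrt_nonneg x]

lemma summable_weight_succ : Summable fun m : ℕ => weight (m + 1) :=
  summable_weight_succ_mul_sqrt.of_nonneg_of_le (fun _ => weight_nonneg _) fun m =>
    le_mul_of_one_le_right (weight_nonneg _) (one_le_sqrt.mpr (by simp))

/-- Each value `|a - b|` is attained by at most two `b`, one on each side of `a`. -/
lemma sum_natAbs_sub_le {m : ℕ} (f : ℕ → ℝ) (hf : ∀ h, 0 ≤ f h) (a : Fin m) :
    ∑ b : Fin m, f ((a : ℤ) - b).natAbs ≤ 2 * ∑ h ∈ Finset.range m, f h := by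
  classical
  let side : Fin m → ℕ × Bool := fun b => (((a : ℤ) - b).natAbs, decide (b ≤ a))
  have hinj : Set.InjOn side (Finset.univ : Finset (Fin m)) := by
    intro x _ y _ hxy
    simp only [side, Prod.mk.injEq] at hxy
    ext
    by_cases hx : x ≤ a <;> by_cases hy : y ≤ a <;> simp_all <;> omega
  have hsub : Finset.univ.image side ⊆ Finset.range m ×ˢ (Finset.univ : Finset Bool) := by
    simp only [Finset.subset_iff, Finset.mem_image, Finset.mem_product, Finset.mem_range]
    rintro _ ⟨b, -, rfl⟩
    exact ⟨by simp only [side]; omega, Finset.mem_univ _⟩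
  calc ∑ b : Fin m, f ((a : ℤ) - b).natAbs = ∑ p ∈ Finset.univ.image side, f p.1 :=
        (Finset.sum_image (f := fun p => f p.1) hinj).symm
    _ ≤ ∑ p ∈ Finset.range m ×ˢ Finset.univ, f p.1 :=
        Finset.sum_le_sum_of_subset_of_nonneg hsub fun p _ _ => hf p.1
    _ = 2 * ∑ h ∈ Finset.range m, f h := by
        rw [Finset.sum_product, Finset.mul_sum]
        simp [two_mul]

lemma frobNorm_toeplitzCov_le (δ : ℕ → ℝ) (hδ : Summable fun h => |δ h|) (m : ℕ) :
    frobNorm (toeplitzCov δ m) ≤ √(2 * m) * ∑' h, |δ h| := by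
  set K := ∑' h, |δ h|
  have hK : 0 ≤ K := tsum_nonneg fun _ => abs_nonneg _
  have hentry : ∀ h, δ h ^ 2 ≤ K * |δ h| := fun h => by
    rw [← sq_abs, sq]
    exact mul_le_mul_of_nonneg_right (hδ.le_tsum h fun _ _ => abs_nonneg _) (abs_nonneg _)
  have hrow : ∀ a : Fin m, ∑ b : Fin m, |δ ((a : ℤ) - b).natAbs| ≤ 2 * K := fun a =>
    (sum_natAbs_sub_le _ (fun _ => abs_nonneg _) a).trans <|
      mul_le_mul_of_nonneg_left (hδ.sum_le_tsum _ fun _ _ => abs_nonneg _) zero_le_two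
  have hsum : ∑ a : Fin m, ∑ b : Fin m, toeplitzCov δ m a b ^ 2 ≤ (√(2 * m) * K) ^ 2 :=
    calc ∑ a : Fin m, ∑ b : Fin m, toeplitzCov δ m a b ^ 2
        ≤ ∑ _a : Fin m, K * (2 * K) := by
          refine Finset.sum_le_sum fun a _ => ?_
          calc ∑ b : Fin m, toeplitzCov δ m a b ^ 2
              ≤ ∑ b : Fin m, K * |δ ((a : ℤ) - b).natAbs| :=
                Finset.sum_le_sum fun b _ => hentry _
            _ ≤ K * (2 * K) := by
                rw [← Finset.mul_sum]
                exact mul_le_mul_of_nonneg_left (hrow a) hK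
      _ = (√(2 * m) * K) ^ 2 := by
          rw [mul_pow, sq_sqrt (by positivity), Finset.sum_const, Finset.card_univ, Fintype.card_fin, nsmul_eq_mul]
          ring
  exact (sqrt_le_sqrt hsum).trans_eq (sqrt_sq (by positivity))

lemma dstarTerm_nonneg (μ₁ μ₂ : ℝ) (γ₁ γ₂ : ℕ → ℝ) (m l : ℕ) :
    0 ≤ dstarTerm μ₁ μ₂ γ₁ γ₂ m l := by
  unfold dstarTerm frobNorm weight
  positivity

lemma dstarTerm_le (μ₁ μ₂ : ℝ) (γ₁ γ₂ : ℕ → ℝ) (hδ : Summable fun h => |γ₁ h - γ₂ h|)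
    (m l : ℕ) :
    dstarTerm μ₁ μ₂ γ₁ γ₂ m l ≤
      weight m * √m * (|μ₁ - μ₂| + √2 * ∑' h, |γ₁ h - γ₂ h|) * weight l := by
  have hfrob := frobNorm_toeplitzCov_le (γ₁ - γ₂) hδ m
  rw [sqrt_mul zero_le_two] at hfrob
  calc dstarTerm μ₁ μ₂ γ₁ γ₂ m l
      ≤ weight m * weight l * (√m * |μ₁ - μ₂| + √2 * √m * ∑' h, |γ₁ h - γ₂ h|) := by
        unfold dstarTerm
        gcongr
        · exact mul_nonneg (weight_nonneg m) (weight_nonneg l)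
        · exact hfrob
    _ = weight m * √m * (|μ₁ - μ₂| + √2 * ∑' h, |γ₁ h - γ₂ h|) * weight l := by ring

theorem dstar_summable_general (μ₁ μ₂ : ℝ) (γ₁ γ₂ : ℕ → ℝ)
    (hsum₁ : Summable fun h : ℕ => |γ₁ h|)
    (hsum₂ : Summable fun h : ℕ => |γ₂ h|) :
    Summable (fun ml : ℕ × ℕ => dstarTerm μ₁ μ₂ γ₁ γ₂ (ml.1 + 1) (ml.2 + 1)) := by
  have hδ : Summable fun h => |γ₁ h - γ₂ h| :=
    (hsum₁.add hsum₂).of_nonneg_of_le (fun _ => abs_nonneg _) fun h => abs_sub _ _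
  set C := |μ₁ - μ₂| + √2 * ∑' h, |γ₁ h - γ₂ h|
  have hC : 0 ≤ C := by positivity
  have hmajorant := (summable_weight_succ_mul_sqrt.mul_right C).mul_of_nonneg summable_weight_succ
    (fun m => mul_nonneg (mul_nonneg (weight_nonneg _) (sqrt_nonneg _)) hC)
    (fun l => weight_nonneg _)
  exact hmajorant.of_nonneg_of_le (fun _ => dstarTerm_nonneg ..)
    fun ml => dstarTerm_le μ₁ μ₂ γ₁ γ₂ hδ _ _

/-- For wide-sense stationary processes `X⁽¹⁾, X⁽²⁾` with means
`μ₁, μ₂` and absolutely summable autocovariance functions `γ₁, γ₂`, the double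
series defining the covariance-based dissimilarity measure
`d*(X⁽¹⁾, X⁽²⁾) = ∑_{m,l≥1} w_m w_l (√m·|μ₁ − μ₂| + ‖Γ₁(m) − Γ₂(m)‖_F)`
converges (is summable), i.e. `d*` is finite. -/
theorem dstar_summable
    {Ω : Type*} [MeasurableSpace Ω] (P : Measure Ω) [IsProbabilityMeasure P]
    (X₁ X₂ : ℕ → Ω → ℝ) (μ₁ μ₂ : ℝ) (γ₁ γ₂ : ℕ → ℝ)
    (hmean₁ : ∀ t : ℕ, (∫ ω, X₁ t ω ∂P) = μ₁)
    (hmean₂ : ∀ t : ℕ, (∫ ω, X₂ t ω ∂P) = μ₂)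
    (hcov₁ : ∀ s t : ℕ, (∫ ω, (X₁ s ω - μ₁) * (X₁ t ω - μ₁) ∂P)
        = γ₁ (((s : ℤ) - (t : ℤ)).natAbs))
    (hcov₂ : ∀ s t : ℕ, (∫ ω, (X₂ s ω - μ₂) * (X₂ t ω - μ₂) ∂P)
        = γ₂ (((s : ℤ) - (t : ℤ)).natAbs))
    (hsum₁ : Summable fun h : ℕ => |γ₁ h|)
    (hsum₂ : Summable fun h : ℕ => |γ₂ h|) :
    Summable (fun ml : ℕ × ℕ => dstarTerm μ₁ μ₂ γ₁ γ₂ (ml.1 + 1) (ml.2 + 1)) :=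
  dstar_summable_general μ₁ μ₂ γ₁ γ₂ hsum₁ hsum₂
end

section
/- (Core of the consistency of the offline clustering algorithm, Algorithm 1.) Let (S, d) be a pseudometric space, let κ ≥ 2, let p₁, …, p_κ ∈ S satisfy d(p_k, p_{k'}) ≥ δ for all k ≠ k' with δ > 0, let x₁, …, x_N ∈ S with N ≥ κ, and let g : {1, …, N} → {1, …, κ} be a surjective assignment with d(x_i, p_{g(i)}) ≤ ε for every i, where 0 < ε < δ/4. Consider the farthest-point initialization: choose (c₁, c₂) to be any pair of indices maximizing d(x_i, x_j) over i < j, and for k = 3, …, κ choose c_k to be any index maximizing i ↦ min_{j=1,…,k−1} d(x_i, x_{c_j}). Then the labels g(c₁), …, g(c_κ) are pairwise distinct, and for every i ∈ {1, …, N} the index k minimizing d(x_i, x_{c_k}) over k ∈ {1, …, κ} is unique and satisfies g(c_k) = g(i); consequently, assigning each point to its nearest center recovers exactly the ground-truth partition {g⁻¹(1), …, g⁻¹(κ)}. -/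
/-!
Since `4ε < δ`, any two points with the same label are closer (at most `2ε`) than any two points
with different labels (at least `δ - 2ε`). Hence a farthest pair carries two different labels,
and as long as some label is still unrepresented among the chosen centers, a point of that label
is farther from all of them than any point sharing a label with one of them; so each new
farthest-point center brings a new label. After `κ` steps every label is represented exactly
once, and the nearest center of a point is the one sharing its label.
-/

open Function

def LabelSeparated {S ι L : Type*} [PseudoMetricSpace S] (x : ι → S) (g : ι → L) : Prop :=
  ∀ i j i' j', g i = g j → g i' ≠ g j' → dist (x i) (x j) < dist (x i') (x j')

def IsNearestCenter {S ι : Type*} [PseudoMetricSpace S] (x : ι → S) (c : ℕ → ι) (κ : ℕ)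
    (i : ι) (k : ℕ) : Prop :=
  k < κ ∧ ∀ k' : ℕ, k' < κ → dist (x i) (x (c k)) ≤ dist (x i) (x (c k'))

section LabelSeparated

variable {S ι L : Type*} [PseudoMetricSpace S] {x : ι → S} {g : ι → L}

theorem labelSeparated_of_dist_le {p : L → S} {δ ε : ℝ}
    (hsep : ∀ a b, a ≠ b → δ ≤ dist (p a) (p b)) (hassign : ∀ i, dist (x i) (p (g i)) ≤ ε)
    (hεδ : ε < δ / 4) : LabelSeparated x g := by
  intro i j i' j' hij hij'
  have hsame : dist (x i) (x j) ≤ 2 * ε := by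
    have := dist_triangle_right (x i) (x j) (p (g j))
    linarith [hassign j, hij ▸ hassign i]
  have hdiff : δ - 2 * ε ≤ dist (x i') (x j') := by
    have := dist_triangle4 (p (g i')) (x i') (x j') (p (g j'))
    linarith [hsep _ _ hij', hassign i', hassign j', dist_comm (p (g i')) (x i')]
  linarith

theorem LabelSeparated.label_ne_of_farthest_pair (hx : LabelSeparated x g) (hg : Surjective g)
    {a b : L} (hab : a ≠ b) {i₀ j₀ : ι} (hfar : ∀ i j, dist (x i) (x j) ≤ dist (x i₀) (x j₀)) :
    g i₀ ≠ g j₀ := by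
  obtain ⟨i, rfl⟩ := hg a
  obtain ⟨j, rfl⟩ := hg b
  intro h
  exact (hx _ _ _ _ h hab).not_ge (hfar i j)

theorem LabelSeparated.label_notMem_of_farthest {κ : Type*} [Finite κ] [Nonempty κ]
    (hx : LabelSeparated x g) (hg : Surjective g) {c : κ → ι} {ℓ : L}
    (hℓ : ℓ ∉ Set.range (g ∘ c)) {i₀ : ι}
    (hfar : ∀ i, ⨅ j, dist (x i) (x (c j)) ≤ ⨅ j, dist (x i₀) (x (c j))) :
    g i₀ ∉ Set.range (g ∘ c) := by
  rintro ⟨j₀, hj₀⟩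
  obtain ⟨i, rfl⟩ := hg ℓ
  obtain ⟨j₁, hj₁⟩ := exists_eq_ciInf_of_finite (f := fun j => dist (x i) (x (c j)))
  have hclose : dist (x i₀) (x (c j₀)) < dist (x i) (x (c j₁)) :=
    hx _ _ _ _ hj₀.symm fun h => hℓ ⟨j₁, h.symm⟩
  have hmin : ⨅ j, dist (x i₀) (x (c j)) ≤ dist (x i₀) (x (c j₀)) :=
    ciInf_le (Set.finite_range _).bddBelow j₀
  have := hfar i
  simp only [← hj₁] at this
  linarith

theorem LabelSeparated.label_eq_of_isNearestCenter (hx : LabelSeparated x g) {c : ℕ → ι}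
    {κ : ℕ} {i : ι} {k₀ : ℕ} (hk₀ : k₀ < κ) (hlabel : g (c k₀) = g i) {k : ℕ}
    (hk : IsNearestCenter x c κ i k) : g (c k) = g i := by
  by_contra h
  exact (hx _ _ _ _ hlabel.symm fun h' => h h'.symm).not_ge (hk.2 k₀ hk₀)

theorem LabelSeparated.existsUnique_isNearestCenter (hx : LabelSeparated x g) {c : ℕ → ι}
    {κ : ℕ} (hinj : ∀ k k', k < κ → k' < κ → g (c k) = g (c k') → k = k') {i : ι} {k₀ : ℕ}
    (hk₀ : k₀ < κ) (hlabel : g (c k₀) = g i) : ∃! k, IsNearestCenter x c κ i k := by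
  refine ⟨k₀, ⟨hk₀, fun k' hk' => ?_⟩, fun k hk => ?_⟩
  · by_cases h : g (c k') = g i
    · rw [hinj k' k₀ hk' hk₀ (h.trans hlabel.symm)]
    · exact (hx _ _ _ _ hlabel.symm fun h' => h h'.symm).le
  · exact hinj k k₀ hk.1 hk₀ ((hx.label_eq_of_isNearestCenter hk₀ hlabel hk).trans hlabel.symm)

end LabelSeparated

section FarthestPoint

variable {S ι : Type*} [PseudoMetricSpace S] {κ : ℕ} {x : ι → S} {g : ι → Fin κ} {c : ℕ → ι}

theorem LabelSeparated.farthestPoint_label_ne (hx : LabelSeparated x g) (hg : Surjective g)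
    (hc01 : ∀ i j, dist (x i) (x j) ≤ dist (x (c 0)) (x (c 1)))
    (hck : ∀ k : ℕ, 2 ≤ k → k < κ → ∀ i,
      (⨅ j : Fin k, dist (x i) (x (c j))) ≤ ⨅ j : Fin k, dist (x (c k)) (x (c j)))
    {k k' : ℕ} (hk'k : k' < k) (hk : k < κ) : g (c k) ≠ g (c k') := by
  rcases Nat.lt_or_ge k 2 with hk2 | hk2
  · obtain ⟨rfl, rfl⟩ : k = 1 ∧ k' = 0 := by omega
    exact (hx.label_ne_of_farthest_pair hg (a := ⟨0, by omega⟩) (b := ⟨1, hk⟩)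
      (by simp [Fin.ext_iff]) hc01).symm
  · have : Nonempty (Fin k) := ⟨⟨0, by omega⟩⟩
    have hnew : ∃ ℓ, ℓ ∉ Set.range (g ∘ c ∘ Fin.val (n := k)) := by
      by_contra! h
      exact hk.not_ge (Fin.le_of_surjective _ h)
    obtain ⟨ℓ, hℓ⟩ := hnew
    exact fun h => hx.label_notMem_of_farthest hg hℓ (hck k hk2 hk) ⟨⟨k', hk'k⟩, h.symm⟩

theorem LabelSeparated.farthestPoint_label_injOn (hx : LabelSeparated x g) (hg : Surjective g)
    (hc01 : ∀ i j, dist (x i) (x j) ≤ dist (x (c 0)) (x (c 1)))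
    (hck : ∀ k : ℕ, 2 ≤ k → k < κ → ∀ i,
      (⨅ j : Fin k, dist (x i) (x (c j))) ≤ ⨅ j : Fin k, dist (x (c k)) (x (c j)))
    {k k' : ℕ} (hk : k < κ) (hk' : k' < κ) (h : g (c k) = g (c k')) : k = k' := by
  by_contra hne
  rcases Nat.lt_or_gt_of_ne hne with hlt | hlt
  · exact hx.farthestPoint_label_ne hg hc01 hck hlt hk' h.symm
  · exact hx.farthestPoint_label_ne hg hc01 hck hlt hk h

theorem exists_lt_label_eq_of_injOn (hinj : ∀ k k', k < κ → k' < κ → g (c k) = g (c k') → k = k')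
    (ℓ : Fin κ) : ∃ k < κ, g (c k) = ℓ := by
  have hsurj : Surjective fun k : Fin κ => g (c k) :=
    Finite.injective_iff_surjective.mp fun a b h => Fin.ext (hinj a b a.isLt b.isLt h)
  obtain ⟨k, hk⟩ := hsurj ℓ
  exact ⟨k, k.isLt, hk⟩

end FarthestPoint

theorem offline_algorithm_consistent_core_general
    {S : Type*} [PseudoMetricSpace S] {κ N : ℕ} (δ ε : ℝ)
    (p : Fin κ → S) (x : Fin N → S) (g : Fin N → Fin κ)
    (hsep : ∀ k k' : Fin κ, k ≠ k' → δ ≤ dist (p k) (p k'))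
    (hg : Function.Surjective g)
    (hassign : ∀ i : Fin N, dist (x i) (p (g i)) ≤ ε)
    (hεδ : ε < δ / 4)
    (c : ℕ → Fin N)
    -- farthest two-point initialization
    (hc01 : ∀ i j : Fin N, dist (x i) (x j) ≤ dist (x (c 0)) (x (c 1)))
    -- each next center is farthest from the previously chosen centers
    (hck : ∀ k : ℕ, 2 ≤ k → k < κ → ∀ i : Fin N,
      (⨅ j : Fin k, dist (x i) (x (c j)))
        ≤ ⨅ j : Fin k, dist (x (c k)) (x (c j))) :
    -- the selected centers carry pairwise distinct ground-truth labels
    (∀ k k' : ℕ, k < κ → k' < κ → g (c k) = g (c k') → k = k') ∧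
    -- the nearest-center index of each point is unique
    (∀ i : Fin N, ∃! k : ℕ, k < κ ∧
      ∀ k' : ℕ, k' < κ → dist (x i) (x (c k)) ≤ dist (x i) (x (c k'))) ∧
    -- and any nearest center has the same ground-truth label as the point
    (∀ i : Fin N, ∀ k : ℕ, k < κ →
      (∀ k' : ℕ, k' < κ → dist (x i) (x (c k)) ≤ dist (x i) (x (c k'))) →
      g (c k) = g i) := by
  have hx : LabelSeparated x g := labelSeparated_of_dist_le hsep hassign hεδ
  have hinj : ∀ k k', k < κ → k' < κ → g (c k) = g (c k') → k = k' :=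
    fun _ _ hk hk' => hx.farthestPoint_label_injOn hg hc01 hck hk hk'
  refine ⟨hinj, fun i => ?_, fun i k hk hmin => ?_⟩ <;>
    obtain ⟨k₀, hk₀, hlabel⟩ := exists_lt_label_eq_of_injOn hinj (g i)
  · exact hx.existsUnique_isNearestCenter hinj hk₀ hlabel
  · exact hx.label_eq_of_isNearestCenter hk₀ hlabel ⟨hk, hmin⟩

/-- core of the consistency of the offline clustering
algorithm, Algorithm 1: in a pseudometric space, let `p 0, …, p (κ−1)` be
`δ`-separated centers, `x 0, …, x (N−1)` points, and `g` a surjective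
ground-truth assignment with `dist (x i) (p (g i)) ≤ ε` where
`0 < ε < δ/4` and `2 ≤ κ ≤ N`.  Suppose the indices `c 0, c 1, …, c (κ−1)` are
chosen by farthest-point initialization: `(c 0, c 1)` maximizes the pairwise
distance, and for `2 ≤ k < κ`, `c k` maximizes the minimal distance to the
previously chosen centers.  Then the ground-truth labels `g (c k)`,
`k < κ`, are pairwise distinct; for every point the nearest-center index is
unique; and every nearest center carries the ground-truth label of the point,
so nearest-center assignment recovers the ground-truth partition. -/
theorem offline_algorithm_consistent_core
    {S : Type*} [PseudoMetricSpace S] {κ N : ℕ} (δ ε : ℝ)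
    (hκ : 2 ≤ κ) (hκN : κ ≤ N)
    (p : Fin κ → S) (x : Fin N → S) (g : Fin N → Fin κ)
    (hδ : 0 < δ)
    (hsep : ∀ k k' : Fin κ, k ≠ k' → δ ≤ dist (p k) (p k'))
    (hg : Function.Surjective g)
    (hassign : ∀ i : Fin N, dist (x i) (p (g i)) ≤ ε)
    (hε : 0 < ε) (hεδ : ε < δ / 4)
    (c : ℕ → Fin N)
    -- farthest two-point initialization
    (hc01 : ∀ i j : Fin N, dist (x i) (x j) ≤ dist (x (c 0)) (x (c 1)))
    -- each next center is farthest from the previously chosen centers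
    (hck : ∀ k : ℕ, 2 ≤ k → k < κ → ∀ i : Fin N,
      (⨅ j : Fin k, dist (x i) (x (c j)))
        ≤ ⨅ j : Fin k, dist (x (c k)) (x (c j))) :
    -- the selected centers carry pairwise distinct ground-truth labels
    (∀ k k' : ℕ, k < κ → k' < κ → g (c k) = g (c k') → k = k') ∧
    -- the nearest-center index of each point is unique
    (∀ i : Fin N, ∃! k : ℕ, k < κ ∧
      ∀ k' : ℕ, k' < κ → dist (x i) (x (c k)) ≤ dist (x i) (x (c k'))) ∧
    -- and any nearest center has the same ground-truth label as the point
    (∀ i : Fin N, ∀ k : ℕ, k < κ →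
      (∀ k' : ℕ, k' < κ → dist (x i) (x (c k)) ≤ dist (x i) (x (c k'))) →
      g (c k) = g i) :=
  offline_algorithm_consistent_core_general δ ε p x g hsep hg hassign hεδ c hc01 hck
end
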